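/- Let P be a k-plex containing a designated vertex v_i with |P| ≥ q. Suppose u_1, u_2 ∈ P are distinct vertices both adjacent to v_i but non-adjacent to each other. Let C = (N_G(v_i) ∩ P) \ {u_1, u_2}. Then |N_C(u_1) ∩ N_C(u_2)| ≥ q - k - 2·max{k-1, 1}. -/

import Mathlib

open Finset

variable {V : Type*} [Fintype V] [DecidableEq V]

/-- A set `P` of vertices is a `k`-plex in `G` if every `u ∈ P` has degree at least
`|P| - k` in the induced subgraph `G[P]`, i.e. `|P| ≤ d_P(u) + k`. -/
def SimpleGraph.IsKPlex (G : SimpleGraph V) [DecidableRel G.Adj] (k : ℕ) (P : Finset V) : Prop :=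
  ∀ u ∈ P, P.card ≤ (P.filter (fun x => G.Adj u x)).card + k

/-!
Every vertex of a `k`-plex `P` has at most `k` non-neighbours in `P`, itself included. Since `u₁`
and `u₂` are non-neighbours of both `u₁` and `u₂` lying outside `C`, each of `u₁, u₂` misses at
most `k - 2` vertices of `C`; in particular `k ≥ 2`. As `v_i` misses at most `k` vertices of `P`,
`|C| ≥ |P| - k - 2`, and the common neighbours of `u₁, u₂` in `C` number at least
`|C| - 2(k - 2) ≥ q - k - 2(k - 1)`.
-/

namespace Finset

variable {α : Type*} [DecidableEq α]

theorem card_le_card_filter_and_add_card_filter_not_add_card_filter_not (s : Finset α)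
    (p r : α → Prop) [DecidablePred p] [DecidablePred r] :
    #s ≤ #(s.filter fun x => p x ∧ r x) + #(s.filter fun x => ¬ p x) +
      #(s.filter fun x => ¬ r x) := by
  have hcover : s ⊆ (s.filter fun x => p x ∧ r x) ∪ (s.filter fun x => ¬ p x) ∪
      (s.filter fun x => ¬ r x) := by
    intro x hx
    simp only [mem_union, mem_filter]
    tauto
  exact (card_le_card hcover).trans
    ((card_union_le _ _).trans (Nat.add_le_add_right (card_union_le _ _) _))

end Finset

namespace SimpleGraph.IsKPlex

variable {α : Type*} {G : SimpleGraph α} [DecidableRel G.Adj] {k : ℕ} {P : Finset α}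

theorem card_filter_not_adj_le (hP : G.IsKPlex k P) {u : α} (hu : u ∈ P) :
    #(P.filter fun x => ¬ G.Adj u x) ≤ k := by
  have := card_filter_add_card_filter_not (s := P) (p := fun x => G.Adj u x)
  have := hP u hu
  omega

theorem card_le_card_neighborFinset_inter_add [Fintype α] [DecidableEq α] (hP : G.IsKPlex k P)
    {v : α} (hv : v ∈ P) :
    #P ≤ #(G.neighborFinset v ∩ P) + k := by
  have hfilter : G.neighborFinset v ∩ P = P.filter fun x => G.Adj v x := by
    ext x
    simp [and_comm]
  exact hfilter ▸ hP v hv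

theorem card_filter_not_adj_sdiff_add_card_le [DecidableEq α] (hP : G.IsKPlex k P) {w : α}
    (hw : w ∈ P) {s T : Finset α} (hs : s ⊆ P) (hT : T ⊆ P) (hwT : ∀ x ∈ T, ¬ G.Adj w x) :
    #((s \ T).filter fun x => ¬ G.Adj w x) + #T ≤ k := by
  have hdisj : Disjoint ((s \ T).filter fun x => ¬ G.Adj w x) T :=
    sdiff_disjoint.mono_left (filter_subset _ _)
  calc #((s \ T).filter fun x => ¬ G.Adj w x) + #T
      = #(((s \ T).filter fun x => ¬ G.Adj w x) ∪ T) := (card_union_of_disjoint hdisj).symm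
    _ ≤ #(P.filter fun x => ¬ G.Adj w x) :=
      card_le_card (union_subset (filter_subset_filter _ (sdiff_subset.trans hs))
        fun x hx => mem_filter.mpr ⟨hT hx, hwT x hx⟩)
    _ ≤ k := hP.card_filter_not_adj_le hw

end SimpleGraph.IsKPlex

theorem pair_prune_neighbors_nonadjacent_general (G : SimpleGraph V) [DecidableRel G.Adj]
    (k q : ℕ) (P : Finset V) (v_i : V) (hP : G.IsKPlex k P)
    (hvi : v_i ∈ P) (hq : q ≤ P.card) (u1 u2 : V) (h1 : u1 ∈ P) (h2 : u2 ∈ P)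
    (hne : u1 ≠ u2) (h12 : ¬ G.Adj u1 u2) :
    (q : ℤ) - (k : ℤ) - 2 * max ((k : ℤ) - 1) 1 ≤
      ((((G.neighborFinset v_i ∩ P) \ {u1, u2}).filter
          (fun x => G.Adj u1 x ∧ G.Adj u2 x)).card : ℤ) := by
  set A := G.neighborFinset v_i ∩ P
  have hAP : A ⊆ P := inter_subset_right
  have hpair : {u1, u2} ⊆ P := insert_subset h1 (singleton_subset_iff.mpr h2)
  have hA : #P ≤ #A + k := hP.card_le_card_neighborFinset_inter_add hvi
  have hC : #A ≤ #(A \ {u1, u2}) + #{u1, u2} := card_le_card_sdiff_add_card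
  have hmiss1 := hP.card_filter_not_adj_sdiff_add_card_le h1 hAP hpair (by simp [h12])
  have hmiss2 := hP.card_filter_not_adj_sdiff_add_card_le h2 hAP hpair
    (by simp [G.adj_comm, h12])
  have hcover := card_le_card_filter_and_add_card_filter_not_add_card_filter_not
    (A \ {u1, u2}) (G.Adj u1) (G.Adj u2)
  rw [card_pair hne] at hC hmiss1 hmiss2
  omega

theorem pair_prune_neighbors_nonadjacent (G : SimpleGraph V) [DecidableRel G.Adj]
    (k q : ℕ) (hk : 1 ≤ k) (P : Finset V) (v_i : V) (hP : G.IsKPlex k P)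
    (hvi : v_i ∈ P) (hq : q ≤ P.card) (u1 u2 : V) (h1 : u1 ∈ P) (h2 : u2 ∈ P)
    (hne : u1 ≠ u2) (ha1 : G.Adj u1 v_i) (ha2 : G.Adj u2 v_i)
    (h12 : ¬ G.Adj u1 u2) :
    (q : ℤ) - (k : ℤ) - 2 * max ((k : ℤ) - 1) 1 ≤
      ((((G.neighborFinset v_i ∩ P) \ {u1, u2}).filter
          (fun x => G.Adj u1 x ∧ G.Adj u2 x)).card : ℤ) :=
  pair_prune_neighbors_nonadjacent_general G k q P v_i hP hvi hq u1 u2 h1 h2 hne h12
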